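/- arXiv:1410.3291 — 4 statements merged into one kernel-verified Lean document; each statement's English description precedes it below -/
import Mathlib

section
/- Let $k \geq 2$ be an integer, and let $\Lambda > 0$, $a_0 \geq \Lambda$ be reals. Define the sequence $\hat{a}_0 = a_0$ and $\hat{a}_{t+1} = a_0 + \frac{(\hat{a}_t/\Lambda)^k}{k}\Lambda$. Then for all $t \geq 0$, $\hat{a}_{t+1}/\hat{a}_t \geq (a_0/((1-1/k)\Lambda))^{(k-1)/k}$. -/
/-!
Writing `x = â_t / Λ`, the ratio `â_{t+1} / â_t` equals `(a₀ / Λ) / x + x ^ (k - 1) / k`, and weighted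
AM-GM with weights `(k - 1) / k` and `1 / k` bounds this from below, uniformly in `x > 0`, by its
minimum `(a₀ k / ((k - 1) Λ)) ^ ((k - 1) / k)`.
-/

open Real

lemma rpow_le_div_add_rpow_sub_one_div {p c x : ℝ} (hp : 1 < p) (hc : 0 < c) (hx : 0 < x) :
    (c * p / (p - 1)) ^ ((p - 1) / p) ≤ c / x + x ^ (p - 1) / p := by
  have hp₀ : 0 < p := by linarith
  have hp₁ : 0 < p - 1 := by linarith
  have amgm := geom_mean_le_arith_mean2_weighted (w₁ := (p - 1) / p) (w₂ := 1 / p)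
    (p₁ := c * p / ((p - 1) * x)) (p₂ := x ^ (p - 1)) (by positivity) (by positivity)
    (by positivity) (by positivity) (by field_simp; ring)
  have hprod : (c * p / ((p - 1) * x)) ^ ((p - 1) / p) * (x ^ (p - 1)) ^ (1 / p) =
      (c * p / (p - 1)) ^ ((p - 1) / p) := by
    rw [← rpow_mul hx.le, mul_one_div, ← div_div, div_rpow (by positivity) hx.le,
      div_mul_cancel₀ _ (by positivity)]
  have hsum : (p - 1) / p * (c * p / ((p - 1) * x)) + 1 / p * x ^ (p - 1) =
      c / x + x ^ (p - 1) / p := by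
    field_simp
  rwa [hprod, hsum] at amgm

lemma add_rpow_div_mul_div_eq {p a₀ Λ y : ℝ} (hΛ : 0 < Λ) (hy : 0 < y) :
    (a₀ + (y / Λ) ^ p / p * Λ) / y = a₀ / Λ / (y / Λ) + (y / Λ) ^ (p - 1) / p := by
  rw [rpow_sub_one (by positivity)]
  field_simp

theorem stmt_0 (k : ℕ) (hk : 2 ≤ k) (Λ a₀ : ℝ) (hΛ : 0 < Λ) (ha₀ : Λ ≤ a₀)
    (a : ℕ → ℝ) (h0 : a 0 = a₀)
    (hrec : ∀ t, a (t + 1) = a₀ + (a t / Λ) ^ k / k * Λ) :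
    ∀ t : ℕ, a (t + 1) / a t ≥ (a₀ / ((1 - 1 / (k : ℝ)) * Λ)) ^ (((k : ℝ) - 1) / k) := by
  have hk₁ : (1 : ℝ) < k := by exact_mod_cast hk
  have ha₀pos : 0 < a₀ := hΛ.trans_le ha₀
  have hpos : ∀ t, 0 < a t := by
    intro t
    induction t with
    | zero => rwa [h0]
    | succ t ih => rw [hrec]; positivity
  have hbase : a₀ / ((1 - 1 / (k : ℝ)) * Λ) = a₀ / Λ * k / (k - 1) := by
    field_simp
  intro t
  rw [hrec, ← rpow_natCast, add_rpow_div_mul_div_eq hΛ (hpos t), hbase]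
  exact rpow_le_div_add_rpow_sub_one_div hk₁ (div_pos ha₀pos hΛ) (div_pos (hpos t) hΛ)
end

section
/- Let $k \geq 2$ be an integer and $\Lambda > 0$. Let $(\hat{a}_t)$ and $(\hat{b}_t)$ satisfy the same recursion $u_{t+1} = u_0 + (u_t/\Lambda)^k \Lambda/k$ with initial values $\hat{a}_0 > 1$ and $\hat{b}_0 = \hat{a}_0 - 1$ (more generally $\hat{b}_0 \geq \hat{a}_0 - 1$, $\hat{b}_0 \le \hat a_0$). Then for all $t \geq 0$, $\hat{b}_t / \hat{a}_t \geq (1 - 1/\hat{a}_0)^{k^t}$. -/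
/-!
If `g` is nonnegative on `[0, ∞)` and satisfies `c ^ k * g x ≤ g y` whenever `0 ≤ c`, `0 ≤ x`
and `c * x ≤ y`, then the orbits `u (t + 1) = u 0 + g (u t)` starting at `a 0` and `b 0 ≥ c * a 0`
satisfy `c ^ (k ^ t) * a t ≤ b t`: in the inductive step the constant term loses the factor
`c ≥ c ^ (k ^ (t + 1))`, the nonlinear term loses exactly `(c ^ (k ^ t)) ^ k`.
The map `x ↦ (x / Λ) ^ k * Λ / k` is such a `g`, and `c = 1 - 1 / a 0` gives `c * a 0 = a 0 - 1`.
-/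

section Recursion

variable {g : ℝ → ℝ} {a b : ℕ → ℝ}

lemma initial_le_recursion (hg : ∀ x, 0 ≤ x → 0 ≤ g x) (ha : ∀ t, a (t + 1) = a 0 + g (a t))
    (ha0 : 0 ≤ a 0) (t : ℕ) : a 0 ≤ a t := by
  cases t with
  | zero => exact le_rfl
  | succ t =>
    rw [ha]
    exact le_add_of_nonneg_right (hg _ (ha0.trans (initial_le_recursion hg ha ha0 t)))

lemma pow_pow_mul_le_of_recursion {k : ℕ} (hk : k ≠ 0) (hg_nonneg : ∀ x, 0 ≤ x → 0 ≤ g x)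
    (hg : ∀ c x y, 0 ≤ c → 0 ≤ x → c * x ≤ y → c ^ k * g x ≤ g y)
    (ha : ∀ t, a (t + 1) = a 0 + g (a t)) (hb : ∀ t, b (t + 1) = b 0 + g (b t))
    {c : ℝ} (hc0 : 0 ≤ c) (hc1 : c ≤ 1) (ha0 : 0 ≤ a 0) (hab : c * a 0 ≤ b 0) (t : ℕ) :
    c ^ (k ^ t) * a t ≤ b t := by
  induction t with
  | zero => simpa using hab
  | succ t ih =>
    have hpow_le : c ^ (k ^ (t + 1)) ≤ c := pow_le_of_le_one hc0 hc1 (pow_ne_zero _ hk)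
    have hconst : c ^ (k ^ (t + 1)) * a 0 ≤ b 0 :=
      (mul_le_mul_of_nonneg_right hpow_le ha0).trans hab
    have hnonlin : c ^ (k ^ (t + 1)) * g (a t) ≤ g (b t) := by
      rw [pow_succ, pow_mul]
      exact hg _ _ _ (by positivity) (ha0.trans (initial_le_recursion hg_nonneg ha ha0 t)) ih
    rw [ha, hb, mul_add]
    exact add_le_add hconst hnonlin

end Recursion

lemma pow_mul_le_div_pow_mul_div {k : ℕ} {Λ c x y : ℝ} (hΛ : 0 < Λ) (hc : 0 ≤ c) (hx : 0 ≤ x)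
    (hxy : c * x ≤ y) : c ^ k * ((x / Λ) ^ k * Λ / k) ≤ (y / Λ) ^ k * Λ / k := by
  calc c ^ k * ((x / Λ) ^ k * Λ / k) = (c * x / Λ) ^ k * Λ / k := by ring
    _ ≤ (y / Λ) ^ k * Λ / k := by gcongr

theorem stmt_3_general (k : ℕ) (hk : 2 ≤ k) (Λ : ℝ) (hΛ : 0 < Λ)
    (a b : ℕ → ℝ)
    (hareca : ∀ t, a (t + 1) = a 0 + (a t / Λ) ^ k * Λ / k)
    (harecb : ∀ t, b (t + 1) = b 0 + (b t / Λ) ^ k * Λ / k)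
    (ha0 : 1 < a 0) (hb0l : a 0 - 1 ≤ b 0) :
    ∀ t : ℕ, b t / a t ≥ (1 - 1 / a 0) ^ (k ^ t) := by
  intro t
  have ha0_pos : 0 < a 0 := by linarith
  have hg_nonneg : ∀ x : ℝ, 0 ≤ x → 0 ≤ (x / Λ) ^ k * Λ / k := fun x hx => by positivity
  have hat : 0 < a t := ha0_pos.trans_le (initial_le_recursion hg_nonneg hareca ha0_pos.le t)
  have hc0 : 0 ≤ 1 - 1 / a 0 := by rw [sub_nonneg, div_le_one ha0_pos]; exact ha0.le
  have hc1 : 1 - 1 / a 0 ≤ 1 := sub_le_self _ (by positivity)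
  have hab : (1 - 1 / a 0) * a 0 ≤ b 0 := by rwa [sub_mul, one_div_mul_cancel ha0_pos.ne', one_mul]
  rw [ge_iff_le, le_div_iff₀ hat]
  exact pow_pow_mul_le_of_recursion (by omega) hg_nonneg
    (fun _ _ _ hc hx hxy => pow_mul_le_div_pow_mul_div hΛ hc hx hxy) hareca harecb hc0 hc1
    ha0_pos.le hab t

theorem stmt_3 (k : ℕ) (hk : 2 ≤ k) (Λ : ℝ) (hΛ : 0 < Λ)
    (a b : ℕ → ℝ)
    (hareca : ∀ t, a (t + 1) = a 0 + (a t / Λ) ^ k * Λ / k)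
    (harecb : ∀ t, b (t + 1) = b 0 + (b t / Λ) ^ k * Λ / k)
    (ha0 : 1 < a 0) (hb0l : a 0 - 1 ≤ b 0) (hb0u : b 0 ≤ a 0) :
    ∀ t : ℕ, b t / a t ≥ (1 - 1 / a 0) ^ (k ^ t) :=
  stmt_3_general k hk Λ hΛ a b hareca harecb ha0 hb0l
end

section
/- Let $k \geq 2$, $\Lambda > 0$, $C_1 \geq 1$, and $c_0 \geq 2$. Let $(\hat{a}_t)$ and $(\hat{b}_t)$ satisfy the recursion $u_{t+1} = u_0 + (u_t/\Lambda)^k \Lambda / k$ with $\hat{a}_0 = C_1 \Lambda$ and $\hat{b}_0 = c_0 C_1 \Lambda$. Write $c_t = \hat{b}_t / \hat{a}_t$ and $x_t = \hat{a}_t/\Lambda$. Then for all $t \geq 0$: $c_{t+1} \geq c_t^k \left(1 - \frac{C_1}{C_1 + x_t^k/k}\right)$. -/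
/-!
Both sequences follow the same recursion, so dividing by `Λ` gives
`c_{t+1} = (c₀ C₁ + (c_t x_t)^k / k) / (C₁ + x_t^k / k)`. Dropping the nonnegative term `c₀ C₁`
from the numerator leaves `c_t^k · (x_t^k / k) / (C₁ + x_t^k / k) = c_t^k (1 - C₁ / (C₁ + x_t^k / k))`.
-/

def IsBootstrapRec (k : ℕ) (Λ : ℝ) (u : ℕ → ℝ) : Prop :=
  ∀ t, u (t + 1) = u 0 + (u t / Λ) ^ k * Λ / k

namespace IsBootstrapRec

variable {k : ℕ} {Λ : ℝ} {u : ℕ → ℝ}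

theorem pos (hu : IsBootstrapRec k Λ u) (hΛ : 0 < Λ) (h0 : 0 < u 0) (t : ℕ) : 0 < u t := by
  induction t with
  | zero => exact h0
  | succ t ih =>
    rw [hu t]
    have : 0 < u t / Λ := div_pos ih hΛ
    positivity

theorem succ_div (hu : IsBootstrapRec k Λ u) (hΛ : Λ ≠ 0) (t : ℕ) :
    u (t + 1) / Λ = u 0 / Λ + (u t / Λ) ^ k / k := by
  rw [hu t]
  field_simp

end IsBootstrapRec

theorem mul_one_sub_div_le_add_mul_div {p q y m : ℝ} (hp : 0 ≤ p) (hqy : 0 < q + y) :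
    m * (1 - q / (q + y)) ≤ (p + m * y) / (q + y) := by
  rw [one_sub_div hqy.ne', add_sub_cancel_left, ← mul_div_assoc]
  exact div_le_div_of_nonneg_right (le_add_of_nonneg_left hp) hqy.le

theorem stmt_4_general (k : ℕ) (Λ C₁ c₀ : ℝ) (hΛ : 0 < Λ) (hC₁ : 1 ≤ C₁) (hc₀ : 2 ≤ c₀)
    (a b : ℕ → ℝ)
    (hareca : ∀ t, a (t + 1) = a 0 + (a t / Λ) ^ k * Λ / k)
    (harecb : ∀ t, b (t + 1) = b 0 + (b t / Λ) ^ k * Λ / k)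
    (ha0 : a 0 = C₁ * Λ) (hb0 : b 0 = c₀ * C₁ * Λ) :
    ∀ t : ℕ, b (t + 1) / a (t + 1) ≥ (b t / a t) ^ k * (1 - C₁ / (C₁ + (a t / Λ) ^ k / k)) := by
  intro t
  have hC₁pos : 0 < C₁ := zero_lt_one.trans_le hC₁
  have hat : 0 < a t := IsBootstrapRec.pos hareca hΛ (by rw [ha0]; positivity) t
  have hb0Λ : b 0 / Λ = c₀ * C₁ := by rw [hb0, mul_div_cancel_right₀ _ hΛ.ne']
  have ha0Λ : a 0 / Λ = C₁ := by rw [ha0, mul_div_cancel_right₀ _ hΛ.ne']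
  have hbtΛ : b t / Λ = b t / a t * (a t / Λ) := (div_mul_div_cancel₀ hat.ne').symm
  rw [ge_iff_le, ← div_div_div_cancel_right₀ hΛ.ne' (b (t + 1)),
    IsBootstrapRec.succ_div harecb hΛ.ne', IsBootstrapRec.succ_div hareca hΛ.ne',
    hb0Λ, ha0Λ, hbtΛ, mul_pow, mul_div_assoc]
  exact mul_one_sub_div_le_add_mul_div (by positivity)
    (add_pos_of_pos_of_nonneg hC₁pos (by positivity))

theorem stmt_4 (k : ℕ) (hk : 2 ≤ k) (Λ C₁ c₀ : ℝ) (hΛ : 0 < Λ) (hC₁ : 1 ≤ C₁) (hc₀ : 2 ≤ c₀)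
    (a b : ℕ → ℝ)
    (hareca : ∀ t, a (t + 1) = a 0 + (a t / Λ) ^ k * Λ / k)
    (harecb : ∀ t, b (t + 1) = b 0 + (b t / Λ) ^ k * Λ / k)
    (ha0 : a 0 = C₁ * Λ) (hb0 : b 0 = c₀ * C₁ * Λ) :
    ∀ t : ℕ, b (t + 1) / a (t + 1) ≥ (b t / a t) ^ k * (1 - C₁ / (C₁ + (a t / Λ) ^ k / k)) :=
  stmt_4_general k Λ C₁ c₀ hΛ hC₁ hc₀ a b hareca harecb ha0 hb0
end

section
/- Let $W \sim \mathrm{Bin}(n, p)$ be a binomial random variable with $np \leq 1/2$. Then for every integer $b \geq 0$, $\Pr[W \geq b] \leq (1 + 2np) \Pr[W = b]$. -/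
/-! For `j ≥ 1` and `p ≤ 1/2` the ratio of consecutive binomial weights is
`(n - j) p / ((j + 1) (1 - p)) ≤ n p`, so a tail starting at `b ≥ 1` is dominated by a geometric
series and is at most `1 / (1 - n p)` times the weight at `b`; and `1 / (1 - x) ≤ 1 + 2 x` for
`0 ≤ x ≤ 1/2`. For `b = 0` the tail is the total mass `1`, while Bernoulli's inequality gives
`(1 - p) ^ n ≥ 1 - n p`. -/

open Finset

def binomialWeight (n : ℕ) (p : ℝ) (j : ℕ) : ℝ :=
  (n.choose j : ℝ) * p ^ j * (1 - p) ^ (n - j)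

theorem Nat.two_mul_choose_succ_le {n j : ℕ} (hj : 1 ≤ j) :
    2 * n.choose (j + 1) ≤ n * n.choose j :=
  calc 2 * n.choose (j + 1) ≤ n.choose (j + 1) * (j + 1) := by rw [mul_comm]; gcongr; omega
    _ = n.choose j * (n - j) := Nat.choose_succ_right_eq n j
    _ ≤ n * n.choose j := by rw [mul_comm]; gcongr; omega

theorem sum_Icc_le_div_one_sub_of_succ_le_mul {f : ℕ → ℝ} {r : ℝ} {b n : ℕ}
    (hr0 : 0 ≤ r) (hr1 : r < 1) (hfb : 0 ≤ f b)
    (hstep : ∀ j, b ≤ j → f (j + 1) ≤ r * f j) :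
    ∑ j ∈ Icc b n, f j ≤ f b / (1 - r) := by
  have hgeom (k : ℕ) : f (b + k) ≤ r ^ k * f b :=
    le_geom (u := fun k => f (b + k)) hr0 k fun i _ => hstep (b + i) (Nat.le_add_right b i)
  calc ∑ j ∈ Icc b n, f j = ∑ k ∈ range (n + 1 - b), f (b + k) := by
        rw [← Ico_add_one_right_eq_Icc, sum_Ico_eq_sum_range]
    _ ≤ (∑ k ∈ range (n + 1 - b), r ^ k) * f b := by
        rw [sum_mul]; exact sum_le_sum fun k _ => hgeom k
    _ ≤ 1 / (1 - r) * f b := by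
        refine mul_le_mul_of_nonneg_right ?_ hfb
        simpa using geom_sum_Ico_le_of_lt_one (m := 0) (n := n + 1 - b) hr0 hr1
    _ = f b / (1 - r) := by ring

section binomialWeight

variable {n : ℕ} {p : ℝ}

theorem binomialWeight_nonneg (hp0 : 0 ≤ p) (hp1 : p ≤ 1) (j : ℕ) :
    0 ≤ binomialWeight n p j := by
  have : 0 ≤ 1 - p := by linarith
  unfold binomialWeight; positivity

theorem sum_Icc_zero_binomialWeight (n : ℕ) (p : ℝ) :
    ∑ j ∈ Icc 0 n, binomialWeight n p j = 1 := by
  rw [← Nat.range_succ_eq_Icc_zero]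
  have binomial_theorem := add_pow p (1 - p) n
  rw [add_sub_cancel, one_pow] at binomial_theorem
  rw [binomial_theorem]
  exact sum_congr rfl fun j _ => by simp only [binomialWeight]; ring

theorem one_sub_mul_le_binomialWeight_zero (hp2 : p ≤ 2) :
    1 - n * p ≤ binomialWeight n p 0 := by
  have := one_add_mul_sub_le_pow (a := 1 - p) (by linarith) n
  simp only [binomialWeight, Nat.choose_zero_right, Nat.cast_one, pow_zero, Nat.sub_zero, one_mul]
  linarith

theorem binomialWeight_succ_le (hp0 : 0 ≤ p) (hp : p ≤ 1 / 2) {j : ℕ} (hj : 1 ≤ j) :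
    binomialWeight n p (j + 1) ≤ n * p * binomialWeight n p j := by
  rcases lt_or_ge j n with hjn | hnj
  · obtain ⟨k, rfl⟩ : ∃ k, n = j + 1 + k := ⟨n - (j + 1), by omega⟩
    have hchoose :
        2 * ((j + 1 + k).choose (j + 1) : ℝ) ≤ (j + 1 + k : ℕ) * (j + 1 + k).choose j := by
      exact_mod_cast Nat.two_mul_choose_succ_le hj
    have : 0 ≤ 1 - p := by linarith
    simp only [binomialWeight, show j + 1 + k - (j + 1) = k by omega,
      show j + 1 + k - j = k + 1 by omega]
    calc ((j + 1 + k).choose (j + 1) : ℝ) * p ^ (j + 1) * (1 - p) ^ k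
        = (j + 1 + k).choose (j + 1) * (p ^ (j + 1) * (1 - p) ^ k) := by ring
      _ ≤ (j + 1 + k : ℕ) * (j + 1 + k).choose j * (1 - p) * (p ^ (j + 1) * (1 - p) ^ k) := by
        gcongr; nlinarith
      _ = _ := by ring
  · have : n.choose (j + 1) = 0 := Nat.choose_eq_zero_of_lt (by omega)
    simp only [binomialWeight, this, Nat.cast_zero, zero_mul]
    have := binomialWeight_nonneg (n := n) hp0 (by linarith) j
    positivity

end binomialWeight

open Finset in
theorem stmt_6 (n : ℕ) (p : ℝ) (hp0 : 0 ≤ p) (hp1 : p ≤ 1) (hmean : (n : ℝ) * p ≤ 1 / 2)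
    (b : ℕ) :
    ∑ j ∈ Finset.Icc b n, (n.choose j : ℝ) * p ^ j * (1 - p) ^ (n - j) ≤
      (1 + 2 * n * p) * ((n.choose b : ℝ) * p ^ b * (1 - p) ^ (n - b)) := by
  change ∑ j ∈ Icc b n, binomialWeight n p j ≤ (1 + 2 * n * p) * binomialWeight n p b
  have hnp : 0 ≤ (n : ℝ) * p := by positivity
  have hkey : 1 ≤ (1 + 2 * n * p) * (1 - n * p) := by nlinarith
  have hwb := binomialWeight_nonneg (n := n) hp0 hp1 b
  rcases Nat.eq_zero_or_pos b with rfl | hb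
  · rw [sum_Icc_zero_binomialWeight]
    exact hkey.trans (by gcongr; exact one_sub_mul_le_binomialWeight_zero (by linarith))
  rcases lt_or_ge n b with hnb | hbn
  · rw [Icc_eq_empty_of_lt hnb, sum_empty]
    positivity
  have hp : p ≤ 1 / 2 := by
    have : (1 : ℝ) ≤ n := by exact_mod_cast hb.trans_le hbn
    nlinarith
  calc ∑ j ∈ Icc b n, binomialWeight n p j ≤ binomialWeight n p b / (1 - n * p) :=
        sum_Icc_le_div_one_sub_of_succ_le_mul hnp (by linarith) hwb
          fun j hj => binomialWeight_succ_le hp0 hp (hb.trans_le hj)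
    _ ≤ (1 + 2 * n * p) * binomialWeight n p b := by
        rw [div_le_iff₀ (by linarith)]
        nlinarith
end
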